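/- Suppose the costs obey increasing differences, i.e. for all agents i < i' and all actions 0 ≤ j < j' ≤ m one has c_{i,j} − c_{i',j} < c_{i,j'} − c_{i',j'} (where c_{i,0} = 0 for every agent). Define φ(i,j) = ρ_j − c_{i,j} − (n−i)(c_{i,j} − c_{i+1,j}) for 1 ≤ i ≤ n−1 and φ(n,j) = ρ_j − c_{n,j}. Then: (a) for every payment profile (t_0=0,t_1,…,t_m) and every tuple (j_1,…,j_n) in which j_i is a best response for agent i, the principal's payoff Σ_{i=1}^n (ρ_{j_i} − t_{j_i}) is at most M := max over all 0 ≤ j_1 ≤ … ≤ j_n ≤ m of Σ_{i=1}^n φ(i,j_i); and (b) there exist a payment profile and a tuple of best responses (one per agent) whose principal's payoff equals M. Consequently, the optimal principal payoff (agents tie-breaking in favor of the principal) equals M. -/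

import Mathlib

/-!
Under increasing differences best responses are weakly increasing in the agent's index. Let
`R_i = Σ_{k<i} (c_{k,j_k} - c_{k+1,j_k})`. Agent `i+1` may imitate agent `i`, so its utility
`u_{i+1} ≥ u_i + (c_{i,j_i} - c_{i+1,j_i})`, and `u_1 ≥ 0` since action `0` is free; hence
`u_i ≥ R_i`. The payoff is `Σ (ρ - c) - Σ u_i ≤ Σ (ρ - c) - Σ R_i`, and exchanging the order of
summation turns the right-hand side into `Σ φ(i, j_i)`, a value at a weakly increasing tuple.

Conversely, for a weakly increasing tuple, increasing differences give
`c_{k,j_k} + R_k ≤ c_{i,j_k} + R_i` for all agents `i, k`, so the payments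
`t_a = min_i (c_{i,a} + R_i)` make each `j_i` a best response leaving agent `i` exactly `R_i`.
-/

open Finset

def IncreasingDifferences (n m : ℕ) (c : ℕ → ℕ → ℝ) : Prop :=
  ∀ i, 1 ≤ i → i < n → ∀ a a', a < a' → a' ≤ m → c i a - c (i + 1) a < c i a' - c (i + 1) a'

def IsBestResponse (m : ℕ) (c : ℕ → ℕ → ℝ) (t : ℕ → ℝ) (i a : ℕ) : Prop :=
  a ≤ m ∧ ∀ a' ≤ m, t a' - c i a' ≤ t a - c i a

def costGap (c : ℕ → ℕ → ℝ) (i a : ℕ) : ℝ := c i a - c (i + 1) a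

def rent (c : ℕ → ℕ → ℝ) (j : ℕ → ℕ) (i : ℕ) : ℝ := ∑ k ∈ Ico 1 i, costGap c k (j k)

lemma sum_Icc_sum_Ico_eq {R : Type*} [CommRing R] (f : ℕ → R) (n : ℕ) :
    ∑ i ∈ Icc 1 n, ∑ k ∈ Ico 1 i, f k = ∑ k ∈ Icc 1 n, ((n : R) - k) * f k := by
  induction n with
  | zero => simp
  | succ n ih =>
    rw [sum_Icc_succ_top (by omega), ih, sum_Icc_succ_top (by omega), Ico_add_one_right_eq_Icc,
      ← sum_add_distrib]
    push_cast
    simp only [sub_self, zero_mul, add_zero]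
    exact sum_congr rfl fun k _ => by ring

section Agents

variable {n m : ℕ} {c : ℕ → ℕ → ℝ} {j : ℕ → ℕ}

lemma sum_Ico_costGap {k i : ℕ} (h : k ≤ i) (a : ℕ) :
    ∑ l ∈ Ico k i, costGap c l a = c k a - c i a := by
  rw [← neg_sub, ← sum_Ico_sub (fun l => c l a) h, ← sum_neg_distrib]
  exact sum_congr rfl fun l _ => (neg_sub _ _).symm

lemma rent_sub_rent {k i : ℕ} (hk : 1 ≤ k) (h : k ≤ i) :
    rent c j i - rent c j k = ∑ l ∈ Ico k i, costGap c l (j l) := by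
  rw [rent, rent, ← sum_Ico_consecutive _ hk h, add_sub_cancel_left]

lemma rent_add_one (i : ℕ) (hi : 1 ≤ i) : rent c j (i + 1) = rent c j i + costGap c i (j i) :=
  sum_Ico_succ_top hi _

lemma sum_phi_eq_sum_sub_sum_rent {ρ : ℕ → ℝ} {φ : ℕ → ℕ → ℝ}
    (hφ : ∀ i, 1 ≤ i → i < n → ∀ a, φ i a = ρ a - c i a - ((n : ℝ) - i) * (c i a - c (i + 1) a))
    (hφn : ∀ a, φ n a = ρ a - c n a) :
    ∑ i ∈ Icc 1 n, φ i (j i) =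
      ∑ i ∈ Icc 1 n, (ρ (j i) - c i (j i)) - ∑ i ∈ Icc 1 n, rent c j i := by
  simp only [rent, sum_Icc_sum_Ico_eq, ← sum_sub_distrib]
  refine sum_congr rfl fun i hi => ?_
  obtain ⟨hi1, hin⟩ := mem_Icc.1 hi
  rcases hin.lt_or_eq with hin | rfl
  · rw [hφ i hi1 hin, costGap]
  · rw [hφn, sub_self, zero_mul, sub_zero]

lemma sum_payoff_eq (ρ t : ℕ → ℝ) (c : ℕ → ℕ → ℝ) (j : ℕ → ℕ) (n : ℕ) :
    ∑ i ∈ Icc 1 n, (ρ (j i) - t (j i)) =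
      ∑ i ∈ Icc 1 n, (ρ (j i) - c i (j i)) - ∑ i ∈ Icc 1 n, (t (j i) - c i (j i)) := by
  rw [← sum_sub_distrib]
  exact sum_congr rfl fun i _ => by ring

lemma IncreasingDifferences.costGap_le (hid : IncreasingDifferences n m c) {l a a' : ℕ}
    (hl : 1 ≤ l) (hln : l < n) (h : a ≤ a') (ha' : a' ≤ m) :
    costGap c l a ≤ costGap c l a' :=
  h.eq_or_lt.elim (fun e => e ▸ le_rfl) fun h => (hid l hl hln a a' h ha').le

lemma IncreasingDifferences.le_of_isBestResponse (hid : IncreasingDifferences n m c)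
    {t : ℕ → ℝ} {i a a' : ℕ} (hi : 1 ≤ i) (hin : i < n) (ha : IsBestResponse m c t i a)
    (ha' : IsBestResponse m c t (i + 1) a') : a ≤ a' := by
  by_contra! h
  have := hid i hi hin a' a h ha.1
  linarith [ha.2 a' ha'.1, ha'.2 a ha.1]

lemma rent_le_utility {t : ℕ → ℝ} (ht0 : t 0 = 0) (hc0 : c 1 0 = 0)
    (hbr : ∀ i, 1 ≤ i → i ≤ n → IsBestResponse m c t i (j i)) {i : ℕ} (hi : 1 ≤ i)
    (hin : i ≤ n) : rent c j i ≤ t (j i) - c i (j i) := by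
  induction i, hi using Nat.le_induction with
  | base =>
    simpa [rent, ht0, hc0] using (hbr 1 le_rfl hin).2 0 (Nat.zero_le m)
  | succ i hi ih =>
    rw [rent_add_one i hi, costGap]
    linarith [ih (by omega), (hbr (i + 1) (by omega) hin).2 (j i) (hbr i hi (by omega)).1]

lemma IncreasingDifferences.rent_nonneg (hid : IncreasingDifferences n m c)
    (hc0 : ∀ i, 1 ≤ i → i ≤ n → c i 0 = 0) (hjm : ∀ i, 1 ≤ i → i ≤ n → j i ≤ m) {i : ℕ}
    (hin : i ≤ n) : 0 ≤ rent c j i := by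
  refine sum_nonneg fun k hk => ?_
  obtain ⟨hk1, hki⟩ := mem_Ico.1 hk
  calc (0 : ℝ) = costGap c k 0 := by
        rw [costGap, hc0 k hk1 (by omega), hc0 (k + 1) (by omega) (by omega), sub_self]
    _ ≤ costGap c k (j k) := hid.costGap_le hk1 (by omega) (Nat.zero_le _) (hjm k hk1 (by omega))

lemma IncreasingDifferences.cost_add_rent_le (hid : IncreasingDifferences n m c)
    (hjm : ∀ i, 1 ≤ i → i ≤ n → j i ≤ m) (hj : MonotoneOn j (Set.Icc 1 n)) {k i : ℕ}
    (hk : k ∈ Set.Icc 1 n) (hi : i ∈ Set.Icc 1 n) :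
    c k (j k) + rent c j k ≤ c i (j k) + rent c j i := by
  have hjl : ∀ l ∈ Set.Icc 1 n, j l ≤ m := fun l hl => hjm l hl.1 hl.2
  have hkn := hk.2
  have hin := hi.2
  rcases le_total k i with hki | hik
  · have : ∑ l ∈ Ico k i, costGap c l (j k) ≤ ∑ l ∈ Ico k i, costGap c l (j l) :=
      sum_le_sum fun l hl => by
        obtain ⟨hkl, hli⟩ := mem_Ico.1 hl
        have hl : l ∈ Set.Icc 1 n := ⟨hk.1.trans hkl, by omega⟩
        exact hid.costGap_le hl.1 (by omega) (hj hk hl hkl) (hjl l hl)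
    rw [sum_Ico_costGap hki, ← rent_sub_rent hk.1 hki] at this
    linarith
  · have : ∑ l ∈ Ico i k, costGap c l (j l) ≤ ∑ l ∈ Ico i k, costGap c l (j k) :=
      sum_le_sum fun l hl => by
        obtain ⟨hil, hlk⟩ := mem_Ico.1 hl
        have hl : l ∈ Set.Icc 1 n := ⟨hi.1.trans hil, by omega⟩
        exact hid.costGap_le hl.1 (by omega) (hj hl hk hlk.le) (hjl k hk)
    rw [sum_Ico_costGap hik, ← rent_sub_rent hi.1 hik] at this
    linarith

lemma IncreasingDifferences.exists_payment (hid : IncreasingDifferences n m c) (hn : 1 ≤ n)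
    (hc0 : ∀ i, 1 ≤ i → i ≤ n → c i 0 = 0) (hjm : ∀ i, 1 ≤ i → i ≤ n → j i ≤ m)
    (hj : MonotoneOn j (Set.Icc 1 n)) :
    ∃ t : ℕ → ℝ, t 0 = 0 ∧ (∀ i, 1 ≤ i → i ≤ n → IsBestResponse m c t i (j i)) ∧
      ∀ i ∈ Icc 1 n, t (j i) - c i (j i) = rent c j i := by
  have hne : (Icc 1 n).Nonempty := nonempty_Icc.2 hn
  set t : ℕ → ℝ := fun a => (Icc 1 n).inf' hne fun i => c i a + rent c j i
  have t_le : ∀ i ∈ Icc 1 n, ∀ a, t a ≤ c i a + rent c j i := fun i hi a => inf'_le _ hi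
  have t_apply : ∀ i ∈ Icc 1 n, t (j i) = c i (j i) + rent c j i := fun i hi =>
    (t_le i hi _).antisymm <| le_inf' _ _ fun k hk =>
      hid.cost_add_rent_le hjm hj (by simpa using hi) (by simpa using hk)
  refine ⟨t, ?_, fun i hi hin => ⟨hjm i hi hin, fun a _ => ?_⟩, fun i hi => ?_⟩
  · refine le_antisymm ?_ (le_inf' _ _ fun i hi => ?_)
    · simpa [rent, hc0 1 le_rfl hn] using t_le 1 (by simpa using hn) 0
    · obtain ⟨hi1, hin⟩ := mem_Icc.1 hi
      rw [hc0 i hi1 hin, zero_add]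
      exact hid.rent_nonneg hc0 hjm hin
  · have hi' : i ∈ Icc 1 n := mem_Icc.2 ⟨hi, hin⟩
    linarith [t_le i hi' a, t_apply i hi']
  · rw [t_apply i hi, add_sub_cancel_left]

end Agents

theorem stmt_4_general (n m : ℕ) (hn : 1 ≤ n) (ρ : ℕ → ℝ) (c : ℕ → ℕ → ℝ)
    (hc0 : ∀ i, 1 ≤ i → i ≤ n → c i 0 = 0)
    (hid : ∀ i i' a a', 1 ≤ i → i < i' → i' ≤ n → a < a' → a' ≤ m →
      c i a - c i' a < c i a' - c i' a')
    (φ : ℕ → ℕ → ℝ)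
    (hφ : ∀ i, 1 ≤ i → i < n → ∀ a, φ i a = ρ a - c i a - ((n : ℝ) - i) * (c i a - c (i + 1) a))
    (hφn : ∀ a, φ n a = ρ a - c n a)
    (M : ℝ)
    (hM : IsGreatest {s : ℝ | ∃ j : ℕ → ℕ,
      (∀ i, 1 ≤ i → i ≤ n → j i ≤ m) ∧
      (∀ i, 1 ≤ i → i < n → j i ≤ j (i + 1)) ∧
      s = ∑ i ∈ Finset.Icc 1 n, φ i (j i)} M) :
    (∀ (t : ℕ → ℝ) (j : ℕ → ℕ), t 0 = 0 →
      (∀ i, 1 ≤ i → i ≤ n → j i ≤ m ∧ ∀ a ≤ m, t a - c i a ≤ t (j i) - c i (j i)) →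
      ∑ i ∈ Finset.Icc 1 n, (ρ (j i) - t (j i)) ≤ M) ∧
    (∃ (t : ℕ → ℝ) (j : ℕ → ℕ), t 0 = 0 ∧
      (∀ i, 1 ≤ i → i ≤ n → j i ≤ m ∧ ∀ a ≤ m, t a - c i a ≤ t (j i) - c i (j i)) ∧
      ∑ i ∈ Finset.Icc 1 n, (ρ (j i) - t (j i)) = M) := by
  have hid' : IncreasingDifferences n m c := fun i hi hin a a' =>
    hid i (i + 1) a a' hi (Nat.lt_add_one i) hin
  constructor
  · intro t j ht0 hbr
    have hj : ∀ i, 1 ≤ i → i < n → j i ≤ j (i + 1) := fun i hi hin =>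
      hid'.le_of_isBestResponse hi hin (hbr i hi hin.le) (hbr (i + 1) (by omega) hin)
    have hrent : ∀ i ∈ Icc 1 n, rent c j i ≤ t (j i) - c i (j i) := fun i hi =>
      rent_le_utility ht0 (hc0 1 le_rfl hn) hbr (mem_Icc.1 hi).1 (mem_Icc.1 hi).2
    calc ∑ i ∈ Icc 1 n, (ρ (j i) - t (j i))
        ≤ ∑ i ∈ Icc 1 n, (ρ (j i) - c i (j i)) - ∑ i ∈ Icc 1 n, rent c j i := by
          rw [sum_payoff_eq ρ t c j n]
          exact sub_le_sub_left (sum_le_sum hrent) _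
      _ = ∑ i ∈ Icc 1 n, φ i (j i) := (sum_phi_eq_sum_sub_sum_rent hφ hφn).symm
      _ ≤ M := hM.2 ⟨j, fun i hi hin => (hbr i hi hin).1, hj, rfl⟩
  · obtain ⟨j, hjm, hj, hM⟩ := hM.1
    have hmono : MonotoneOn j (Set.Icc 1 n) := monotoneOn_of_le_add_one Set.ordConnected_Icc
      fun i _ hi hi' => hj i hi.1 (Nat.lt_of_succ_le hi'.2)
    obtain ⟨t, ht0, hbr, hrent⟩ := hid'.exists_payment hn hc0 hjm hmono
    refine ⟨t, j, ht0, hbr, ?_⟩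
    rw [sum_payoff_eq ρ t c j n, sum_congr rfl hrent, hM, sum_phi_eq_sum_sub_sum_rent hφ hφn]

/-- Under increasing differences, with
`φ(i,j) = ρ_j - c_{i,j} - (n-i)(c_{i,j} - c_{i+1,j})` for `i < n` and `φ(n,j) = ρ_j - c_{n,j}`,
and `M` the maximum of `Σ_{i=1}^n φ(i,j_i)` over weakly increasing tuples `0 ≤ j_1 ≤ … ≤ j_n ≤ m`:
(a) every principal's payoff at a tuple of best responses is at most `M`, and
(b) some payment profile with a tuple of best responses achieves payoff exactly `M`. -/
theorem stmt_4 (n m : ℕ) (hn : 1 ≤ n) (ρ : ℕ → ℝ) (c : ℕ → ℕ → ℝ)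
    (hρ0 : ρ 0 = 0) (hρ : ∀ k ≤ m, 0 ≤ ρ k)
    (hc0 : ∀ i, 1 ≤ i → i ≤ n → c i 0 = 0)
    (hcnn : ∀ i, 1 ≤ i → i ≤ n → ∀ k ≤ m, 0 ≤ c i k)
    (hid : ∀ i i' a a', 1 ≤ i → i < i' → i' ≤ n → a < a' → a' ≤ m →
      c i a - c i' a < c i a' - c i' a')
    (φ : ℕ → ℕ → ℝ)
    (hφ : ∀ i, 1 ≤ i → i < n → ∀ a, φ i a = ρ a - c i a - ((n : ℝ) - i) * (c i a - c (i + 1) a))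
    (hφn : ∀ a, φ n a = ρ a - c n a)
    (M : ℝ)
    (hM : IsGreatest {s : ℝ | ∃ j : ℕ → ℕ,
      (∀ i, 1 ≤ i → i ≤ n → j i ≤ m) ∧
      (∀ i, 1 ≤ i → i < n → j i ≤ j (i + 1)) ∧
      s = ∑ i ∈ Finset.Icc 1 n, φ i (j i)} M) :
    (∀ (t : ℕ → ℝ) (j : ℕ → ℕ), t 0 = 0 →
      (∀ i, 1 ≤ i → i ≤ n → j i ≤ m ∧ ∀ a ≤ m, t a - c i a ≤ t (j i) - c i (j i)) →
      ∑ i ∈ Finset.Icc 1 n, (ρ (j i) - t (j i)) ≤ M) ∧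
    (∃ (t : ℕ → ℝ) (j : ℕ → ℕ), t 0 = 0 ∧
      (∀ i, 1 ≤ i → i ≤ n → j i ≤ m ∧ ∀ a ≤ m, t a - c i a ≤ t (j i) - c i (j i)) ∧
      ∑ i ∈ Finset.Icc 1 n, (ρ (j i) - t (j i)) = M) :=
  stmt_4_general n m hn ρ c hc0 hid φ hφ hφn M hM
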